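/- Fix reals α∈(0,1), θ>0, λ>0 with √(λθ)<1, and an integer J≥1, and assume 1−α^{J−1}·(1−√(λθ)) < v_th∞(λ) < 1−α^{J}·(1−√(λθ)). Then the time-averaged posterior variance of the deterministic myopic recursion converges: lim_{T→∞} (1/(T+1))·Σ_{k=0}^{T} V̂_k = 1 − (1−α^{J})·(1−√(λθ)) / (J·(1−α)). -/

import Mathlib

/-!
Once `V` exceeds the threshold it is clipped to `s = √(λθ)`, after which `1 - V` contracts by
the factor `α` at every step. The threshold condition says that exactly `J` contractions are
needed to climb back above `v_th∞`, so from `k = 0` on the clipped sequence is `J`-periodic,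
`V̂_k = 1 - α^(k mod J) (1 - s)`, and its Cesàro means converge to the mean over one period,
a geometric sum.
-/

/-- The `S_A = ∞` threshold `v_th∞(λ)`. -/
noncomputable def vthinf (th lam : ℝ) : ℝ :=
  Real.sqrt (lam * th) + lam / 2 +
    Real.sqrt lam * Real.sqrt (Real.sqrt (lam * th) + lam / 4)

open Filter Finset Topology

theorem Function.Periodic.tendsto_sum_range_div {f : ℕ → ℝ} {J : ℕ}
    (hf : Function.Periodic f J) (hJ : 0 < J) :
    Tendsto (fun n : ℕ => (∑ k ∈ range n, f k) / n) atTop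
      (𝓝 ((∑ k ∈ range J, f k) / J)) := by
  set c := (∑ k ∈ range J, f k) / J
  have hJc : (J : ℝ) * c = ∑ k ∈ range J, f k := by
    simp only [c]; field_simp
  clear_value c
  -- the deviation of the partial sums from the linear trend `n * c` is periodic, hence bounded
  set g : ℕ → ℝ := fun n => ∑ k ∈ range n, f k - n * c
  have hg : Function.Periodic g J := fun n => by
    have hshift : ∑ k ∈ range n, f (J + k) = ∑ k ∈ range n, f k :=
      sum_congr rfl fun k _ => by rw [add_comm, hf]
    simp only [g, add_comm n J, sum_range_add, hshift]
    push_cast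
    linear_combination -hJc
  have hg_bdd : IsBoundedUnder (· ≤ ·) atTop (norm ∘ g) :=
    isBoundedUnder_of ⟨∑ r ∈ range J, ‖g r‖, fun n => by
      rw [Function.comp_apply, ← hg.map_mod_nat n]
      exact single_le_sum (f := fun r => ‖g r‖) (fun _ _ => norm_nonneg _)
        (mem_range.2 (Nat.mod_lt n hJ))⟩
  have hdev : Tendsto (fun n : ℕ => (n : ℝ)⁻¹ * g n) atTop (𝓝 0) :=
    tendsto_inv_atTop_nhds_zero_nat.zero_mul_isBoundedUnder_le hg_bdd
  have hlim := hdev.add_const c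
  rw [zero_add] at hlim
  refine hlim.congr' ?_
  filter_upwards [eventually_ne_atTop 0] with n hn
  simp only [g]
  field_simp
  ring

theorem sum_range_one_sub_pow_mul_div {a : ℝ} (ha : a ≠ 1) (c : ℝ) {J : ℕ} (hJ : J ≠ 0) :
    (∑ r ∈ range J, (1 - a ^ r * c)) / J = 1 - (1 - a ^ J) * c / (J * (1 - a)) := by
  have h1a : 1 - a ≠ 0 := sub_ne_zero.2 ha.symm
  rw [sum_sub_distrib, ← sum_mul, geom_sum_eq ha]
  simp only [sum_const, card_range, nsmul_eq_mul, mul_one]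
  field_simp
  ring

theorem myopic_clip_eq_of_threshold {a s v : ℝ} {J : ℕ} {V Vhat : ℕ → ℝ}
    (ha0 : 0 ≤ a) (ha1 : a ≤ 1) (hs : s < 1) (hJ : 0 < J)
    (hlow : 1 - a ^ (J - 1) * (1 - s) < v) (hhigh : v < 1 - a ^ J * (1 - s))
    (hV0 : V 0 = 1) (hVhat : ∀ k, Vhat k = if v < V k then s else V k)
    (hrec : ∀ k, V (k + 1) = 1 - a * (1 - Vhat k)) (k : ℕ) :
    Vhat k = 1 - a ^ (k % J) * (1 - s) := by
  induction k with
  | zero =>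
    have hV0_gt : v < V 0 := by
      rw [hV0]
      linarith [mul_nonneg (pow_nonneg ha0 J) (sub_pos.2 hs).le]
    rw [hVhat, if_pos hV0_gt, Nat.zero_mod, pow_zero, one_mul, sub_sub_cancel]
  | succ k ih =>
    have hV : V (k + 1) = 1 - a ^ (k % J + 1) * (1 - s) := by
      rw [hrec, ih]; ring
    have hmod : (k + 1) % J = (k % J + 1) % J := (Nat.mod_add_mod k J 1).symm
    obtain hdescent | hreset : k % J + 1 < J ∨ k % J + 1 = J :=
      Nat.lt_or_eq_of_le (Nat.mod_lt k hJ)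
    · have hV_le : ¬ v < V (k + 1) := by
        have : a ^ (J - 1) ≤ a ^ (k % J + 1) := pow_le_pow_of_le_one ha0 ha1 (by omega)
        rw [hV, not_lt]
        nlinarith
      rw [hVhat, if_neg hV_le, hV, hmod, Nat.mod_eq_of_lt hdescent]
    · have hV_gt : v < V (k + 1) := by rwa [hV, hreset]
      rw [hVhat, if_pos hV_gt, hmod, hreset, Nat.mod_self, pow_zero, one_mul, sub_sub_cancel]

theorem stmt_7_general (alpha th lam : ℝ) (halpha : alpha ∈ Set.Ioo (0 : ℝ) 1)
    (hsq : Real.sqrt (lam * th) < 1)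
    (J : ℕ) (hJ : 1 ≤ J)
    (hlow : 1 - alpha ^ (J - 1) * (1 - Real.sqrt (lam * th)) < vthinf th lam)
    (hhigh : vthinf th lam < 1 - alpha ^ J * (1 - Real.sqrt (lam * th)))
    (V Vhat : ℕ → ℝ) (hV0 : V 0 = 1)
    (hVhat : ∀ k : ℕ, Vhat k =
      if vthinf th lam < V k then Real.sqrt (lam * th) else V k)
    (hrec : ∀ k : ℕ, V (k + 1) = 1 - alpha * (1 - Vhat k)) :
    Filter.Tendsto
      (fun T : ℕ => (1 / ((T : ℝ) + 1)) * ∑ k ∈ Finset.range (T + 1), Vhat k)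
      Filter.atTop
      (nhds (1 - (1 - alpha ^ J) * (1 - Real.sqrt (lam * th)) / ((J : ℝ) * (1 - alpha)))) := by
  obtain ⟨ha0, ha1⟩ := halpha
  set f : ℕ → ℝ := fun k => 1 - alpha ^ (k % J) * (1 - Real.sqrt (lam * th))
  have hVhat_eq : Vhat = f :=
    funext (myopic_clip_eq_of_threshold ha0.le ha1.le hsq hJ hlow hhigh hV0 hVhat hrec)
  have hf : Function.Periodic f J := fun k => by simp only [f, Nat.add_mod_right]
  have hmean : (∑ r ∈ range J, f r) / J =
      1 - (1 - alpha ^ J) * (1 - Real.sqrt (lam * th)) / (J * (1 - alpha)) := by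
    rw [← sum_range_one_sub_pow_mul_div ha1.ne _ (by omega)]
    congr 1
    exact sum_congr rfl fun r hr => by simp only [f, Nat.mod_eq_of_lt (mem_range.1 hr)]
  rw [← hmean, hVhat_eq]
  refine ((hf.tendsto_sum_range_div hJ).comp (tendsto_add_atTop_nat 1)).congr fun T => ?_
  simp only [Function.comp_apply, Nat.cast_add, Nat.cast_one]
  ring

/-- under the stated threshold condition, the time-averaged
posterior variance of the deterministic myopic recursion converges to
`1 − (1−α^J)·(1−√(λθ))/(J·(1−α))`. -/
theorem stmt_7 (alpha th lam : ℝ) (halpha : alpha ∈ Set.Ioo (0 : ℝ) 1)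
    (hth : 0 < th) (hlam : 0 < lam) (hsq : Real.sqrt (lam * th) < 1)
    (J : ℕ) (hJ : 1 ≤ J)
    (hlow : 1 - alpha ^ (J - 1) * (1 - Real.sqrt (lam * th)) < vthinf th lam)
    (hhigh : vthinf th lam < 1 - alpha ^ J * (1 - Real.sqrt (lam * th)))
    (V Vhat : ℕ → ℝ) (hV0 : V 0 = 1)
    (hVhat : ∀ k : ℕ, Vhat k =
      if vthinf th lam < V k then Real.sqrt (lam * th) else V k)
    (hrec : ∀ k : ℕ, V (k + 1) = 1 - alpha * (1 - Vhat k)) :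
    Filter.Tendsto
      (fun T : ℕ => (1 / ((T : ℝ) + 1)) * ∑ k ∈ Finset.range (T + 1), Vhat k)
      Filter.atTop
      (nhds (1 - (1 - alpha ^ J) * (1 - Real.sqrt (lam * th)) / ((J : ℝ) * (1 - alpha)))) :=
  stmt_7_general alpha th lam halpha hsq J hJ hlow hhigh V Vhat hV0 hVhat hrec
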